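/- Let 0 < ε and τ > 0 with ε + τ ≤ 1, let p > 1 and ω > 0 be real, and let r : [ε, ε+τ] → ℝ be continuously differentiable. Define u(x) = (r(|x|)/|x|) x on the annulus Ω_{(ε,τ)} = {x ∈ ℝ² : ε ≤ |x| ≤ ε + τ}. Then the elastic energy term E₁(u; Ω_{(ε,τ)}) = ω ∫_{Ω_{(ε,τ)}} |Du(x)|^p dx (with |·| the Frobenius norm of the 2×2 derivative matrix) satisfies the exact identity E₁(u; Ω_{(ε,τ)}) = 2πω ∫_ε^{ε+τ} ( r(t)² + r'(t)² t² )^{p/2} t^{1−p} dt. -/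

import Mathlib

noncomputable section

open Real

/-- The reference triangle `T̂ = {x : 0 ≤ x₁, 0 ≤ x₂, x₁ + x₂ ≤ 1}`. -/
def refT : Set (ℝ × ℝ) := {x | 0 ≤ x.1 ∧ 0 ≤ x.2 ∧ x.1 + x.2 ≤ 1}

/-- The quadratic iso-parametric map determined by the six nodes
`b₁, b₂, b₃, b₁₂, b₁₃, b₂₃`, using barycentric coordinates
`λ₁ = x₁`, `λ₂ = x₂`, `λ₃ = 1 - x₁ - x₂` and the quadratic Lagrange basis. -/
def isoQ (b1 b2 b3 b12 b13 b23 : ℝ × ℝ) (x : ℝ × ℝ) : ℝ × ℝ :=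
  (x.1 * (2 * x.1 - 1)) • b1 + (x.2 * (2 * x.2 - 1)) • b2 +
    ((1 - x.1 - x.2) * (2 * (1 - x.1 - x.2) - 1)) • b3 +
    (4 * (x.1 * x.2)) • b12 + (4 * (x.1 * (1 - x.1 - x.2))) • b13 +
    (4 * (x.2 * (1 - x.1 - x.2))) • b23

/-- Jacobian determinant of a planar map (determinant of the 2×2 derivative matrix). -/
def jacDet (f : ℝ × ℝ → ℝ × ℝ) (x : ℝ × ℝ) : ℝ :=
  (fderiv ℝ f x (1, 0)).1 * (fderiv ℝ f x (0, 1)).2 -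
    (fderiv ℝ f x (1, 0)).2 * (fderiv ℝ f x (0, 1)).1

/-- Euclidean norm on `ℝ²`. -/
def enorm2 (p : ℝ × ℝ) : ℝ := Real.sqrt (p.1 ^ 2 + p.2 ^ 2)

/-- Polar angle of a point of `ℝ²` (argument of the corresponding complex number). -/
def polarAngle (p : ℝ × ℝ) : ℝ := Complex.arg ⟨p.1, p.2⟩

/-- Squared Frobenius norm of the 2×2 derivative matrix of a planar map. -/
def frobSq (f : ℝ × ℝ → ℝ × ℝ) (x : ℝ × ℝ) : ℝ :=
  (fderiv ℝ f x (1, 0)).1 ^ 2 + (fderiv ℝ f x (1, 0)).2 ^ 2 +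
    (fderiv ℝ f x (0, 1)).1 ^ 2 + (fderiv ℝ f x (0, 1)).2 ^ 2

/-! For `u(x) = (r(|x|)/|x|) x` one has `Du = (r/ρ) I + (r' - r/ρ) e eᵀ` with `ρ = |x|`,
`e = x/ρ`, so `|Du|² = r'² + (r/ρ)²` depends on `ρ` alone. Polar coordinates (Jacobian `ρ`) reduce
the annulus integral to `2π ∫ ρ (r'² + (r/ρ)²)^{p/2} dρ`, and
`ρ (r'² + (r/ρ)²)^{p/2} = (r² + r'²ρ²)^{p/2} ρ^{1-p}`. -/

open MeasureTheory

theorem continuous_enorm2 : Continuous enorm2 := by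
  unfold enorm2; fun_prop

theorem enorm2_sq (x : ℝ × ℝ) : enorm2 x ^ 2 = x.1 ^ 2 + x.2 ^ 2 :=
  sq_sqrt (by positivity)

theorem enorm2_polarCoord_symm {ρ : ℝ} (hρ : 0 ≤ ρ) (θ : ℝ) :
    enorm2 (polarCoord.symm (ρ, θ)) = ρ := by
  rw [enorm2, polarCoord_symm_apply, mul_pow, mul_pow, ← mul_add, cos_sq_add_sin_sq,
    mul_one, sqrt_sq hρ]

theorem hasFDerivAt_enorm2 {x : ℝ × ℝ} (hx : enorm2 x ≠ 0) :
    HasFDerivAt enorm2 ((enorm2 x)⁻¹ • (x.1 • ContinuousLinearMap.fst ℝ ℝ ℝ +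
      x.2 • ContinuousLinearMap.snd ℝ ℝ ℝ)) x := by
  have hsq : HasFDerivAt (fun y : ℝ × ℝ => y.1 ^ 2 + y.2 ^ 2)
      ((2 * x.1) • ContinuousLinearMap.fst ℝ ℝ ℝ + (2 * x.2) • ContinuousLinearMap.snd ℝ ℝ ℝ) x := by
    refine (((hasFDerivAt_fst (𝕜 := ℝ) (p := x)).pow 2).add
      ((hasFDerivAt_snd (𝕜 := ℝ) (p := x)).pow 2)).congr_fderiv ?_
    ext <;> simp
  have hpos : x.1 ^ 2 + x.2 ^ 2 ≠ 0 := by rwa [← enorm2_sq, pow_ne_zero_iff two_ne_zero]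
  refine ((hasDerivAt_sqrt hpos).comp_hasFDerivAt x hsq).congr_fderiv ?_
  unfold enorm2
  module

theorem fderiv_smul_radial_apply {φ : ℝ → ℝ} {φ' : ℝ} {x : ℝ × ℝ} (hx : enorm2 x ≠ 0)
    (hφ : HasDerivAt φ φ' (enorm2 x)) (v : ℝ × ℝ) :
    fderiv ℝ (fun y => φ (enorm2 y) • y) x v =
      φ (enorm2 x) • v + (φ' * (x.1 * v.1 + x.2 * v.2) / enorm2 x) • x := by
  have hd : HasFDerivAt (fun y => φ (enorm2 y) • y) _ x :=
    (hφ.comp_hasFDerivAt x (hasFDerivAt_enorm2 hx)).smul (hasFDerivAt_id x)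
  rw [hd.fderiv]
  simp only [add_apply, smul_apply,
    ContinuousLinearMap.smulRight_apply, ContinuousLinearMap.id_apply, ContinuousLinearMap.coe_fst',
    ContinuousLinearMap.coe_snd', Function.comp_apply, smul_eq_mul]
  congr 1
  field_simp

theorem frobSq_radial {r : ℝ → ℝ} {r' : ℝ} {x : ℝ × ℝ} (hx : enorm2 x ≠ 0)
    (hr : HasDerivAt r r' (enorm2 x)) :
    frobSq (fun y => (r (enorm2 y) / enorm2 y) • y) x = r' ^ 2 + (r (enorm2 x) / enorm2 x) ^ 2 := by
  have hφ := hr.div (hasDerivAt_id _) hx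
  simp only [frobSq, fderiv_smul_radial_apply (φ := fun t => r t / t) hx hφ]
  simp only [Prod.smul_mk, smul_eq_mul, mul_one, mul_zero, id_eq, add_zero, Prod.fst_add,
    Prod.smul_fst, Prod.snd_add, Prod.smul_snd, zero_add]
  field_simp
  -- the identity holds modulo `|x|² = x₁² + x₂²`
  linear_combination (-(2 * (enorm2 x * r' - r (enorm2 x)) * r (enorm2 x) * enorm2 x ^ 2 +
    (enorm2 x * r' - r (enorm2 x)) ^ 2 * (x.1 ^ 2 + x.2 ^ 2 + enorm2 x ^ 2))) * enorm2_sq x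

theorem setIntegral_annulus_eq_intervalIntegral {E : Type*} [NormedAddCommGroup E]
    [NormedSpace ℝ E] {a b : ℝ} (ha : 0 < a) (hab : a ≤ b) {G : ℝ × ℝ → E} {g : ℝ → E}
    (hG : ∀ x, a ≤ enorm2 x → enorm2 x ≤ b → G x = g (enorm2 x)) :
    ∫ x in {x : ℝ × ℝ | a ≤ enorm2 x ∧ enorm2 x ≤ b}, G x = (2 * π) • ∫ t in a..b, t • g t := by
  set A := {x : ℝ × ℝ | a ≤ enorm2 x ∧ enorm2 x ≤ b}
  have hA : A = enorm2 ⁻¹' Set.Icc a b := rfl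
  have hpolar : ∀ q ∈ polarCoord.target,
      q.1 • A.indicator G (polarCoord.symm q) = (Set.Icc a b).indicator (fun t => t • g t) q.1 := by
    rintro ⟨ρ, θ⟩ ⟨hρ, -⟩
    have hnorm := enorm2_polarCoord_symm (le_of_lt hρ) θ
    by_cases hmem : ρ ∈ Set.Icc a b
    · have hmem' : polarCoord.symm (ρ, θ) ∈ A := by rwa [hA, Set.mem_preimage, hnorm]
      rw [Set.indicator_of_mem hmem', Set.indicator_of_mem hmem, hG _ hmem'.1 hmem'.2, hnorm]
    · have hmem' : polarCoord.symm (ρ, θ) ∉ A := by rwa [hA, Set.mem_preimage, hnorm]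
      rw [Set.indicator_of_notMem hmem', Set.indicator_of_notMem hmem, smul_zero]
  calc ∫ x in A, G x
      = ∫ q in polarCoord.target, q.1 • A.indicator G (polarCoord.symm q) := by
        rw [integral_comp_polarCoord_symm,
          integral_indicator (hA ▸ continuous_enorm2.measurable measurableSet_Icc)]
    _ = ∫ q in Set.Ioi (0 : ℝ) ×ˢ Set.Ioo (-π) π, (Set.Icc a b).indicator (fun t => t • g t) q.1 :=
        setIntegral_congr_fun polarCoord.open_target.measurableSet hpolar
    _ = volume.real (Set.Ioo (-π) π) •
          ∫ t in Set.Ioi 0, (Set.Icc a b).indicator (fun t => t • g t) t := by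
        rw [Measure.volume_eq_prod, ← Measure.prod_restrict, integral_fun_fst,
          measureReal_restrict_apply_univ]
    _ = (2 * π) • ∫ t in a..b, t • g t := by
        rw [setIntegral_indicator measurableSet_Icc,
          Set.inter_eq_self_of_subset_right ((Set.Icc_subset_Ioi_iff hab).mpr ha),
          intervalIntegral.integral_of_le hab, integral_Icc_eq_integral_Ioc, Real.volume_real_Ioo,
          sub_neg_eq_add, ← two_mul, max_eq_left (by positivity)]

theorem mul_sqrt_sq_add_div_sq_rpow {t : ℝ} (ht : 0 < t) (a b p : ℝ) :
    t * √(a ^ 2 + (b / t) ^ 2) ^ p = (b ^ 2 + a ^ 2 * t ^ 2) ^ (p / 2) * t ^ (1 - p) := by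
  have hsqrt : √(a ^ 2 + (b / t) ^ 2) = √(b ^ 2 + a ^ 2 * t ^ 2) / t := by
    rw [← sqrt_sq (div_nonneg (sqrt_nonneg _) ht.le)]
    congr 1
    rw [div_pow, div_pow, sq_sqrt (by positivity)]
    field_simp
    ring
  rw [hsqrt, div_rpow (sqrt_nonneg _) ht.le, sqrt_eq_rpow, ← rpow_mul (by positivity),
    rpow_sub ht, rpow_one]
  field_simp

theorem radial_E1_formula_general (ε τ p ω : ℝ) (hε : 0 < ε) (hτ : 0 < τ) (r r' : ℝ → ℝ)
    (hderiv : ∀ t ∈ Set.Icc ε (ε + τ), HasDerivAt r (r' t) t) :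
    ω * ∫ x in {x : ℝ × ℝ | ε ≤ enorm2 x ∧ enorm2 x ≤ ε + τ},
        Real.sqrt (frobSq (fun y : ℝ × ℝ => (r (enorm2 y) / enorm2 y) • y) x) ^ p =
      2 * π * ω *
        ∫ t in ε..(ε + τ), (r t ^ 2 + r' t ^ 2 * t ^ 2) ^ (p / 2) * t ^ (1 - p) := by
  have hradial : ∀ x, ε ≤ enorm2 x → enorm2 x ≤ ε + τ →
      √(frobSq (fun y : ℝ × ℝ => (r (enorm2 y) / enorm2 y) • y) x) ^ p =
        √(r' (enorm2 x) ^ 2 + (r (enorm2 x) / enorm2 x) ^ 2) ^ p := fun x h₁ h₂ => by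
    rw [frobSq_radial (hε.trans_le h₁).ne' (hderiv _ ⟨h₁, h₂⟩)]
  have hab : ε ≤ ε + τ := le_add_of_nonneg_right hτ.le
  rw [setIntegral_annulus_eq_intervalIntegral hε hab
    (g := fun t => √(r' t ^ 2 + (r t / t) ^ 2) ^ p) hradial, smul_eq_mul,
    intervalIntegral.integral_congr fun t ht => ?_]
  · ring
  · rw [Set.uIcc_of_le hab] at ht
    exact mul_sqrt_sq_add_div_sq_rpow (hε.trans_le ht.1) _ _ _

/-- The exact polar-coordinates formula for the elastic energy term
`E₁(u; Ω_{(ε,τ)}) = ω∫_{Ω_{(ε,τ)}} |Du|^p dx` of a radially symmetric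
deformation `u(x) = (r(|x|)/|x|)x` on the annulus `ε ≤ |x| ≤ ε + τ`. -/
theorem radial_E1_formula (ε τ p ω : ℝ) (hε : 0 < ε) (hτ : 0 < τ) (hετ : ε + τ ≤ 1)
    (hp : 1 < p) (hω : 0 < ω) (r r' : ℝ → ℝ)
    (hderiv : ∀ t ∈ Set.Icc ε (ε + τ), HasDerivAt r (r' t) t)
    (hcont : ContinuousOn r' (Set.Icc ε (ε + τ))) :
    ω * ∫ x in {x : ℝ × ℝ | ε ≤ enorm2 x ∧ enorm2 x ≤ ε + τ},
        Real.sqrt (frobSq (fun y : ℝ × ℝ => (r (enorm2 y) / enorm2 y) • y) x) ^ p =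
      2 * π * ω *
        ∫ t in ε..(ε + τ), (r t ^ 2 + r' t ^ 2 * t ^ 2) ^ (p / 2) * t ^ (1 - p) :=
  radial_E1_formula_general ε τ p ω hε hτ r r' hderiv
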